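/- Let T = diag(1, e^{iπ/4}) (the π/8 gate up to phase), let Ψ = (1/√2)(|00⟩ + |11⟩), and for p ∈ [0,1] let σ(p) = (1−p)·(I⊗T)|Ψ⟩⟨Ψ|(I⊗T)† + (p/4)·(I⊗I) be the Jamiolkowski state of the π/8 gate depolarized at rate p. Let N(p) be the 2×2 matrix of σ(p)'s entries at the even-parity indices, [[σ(p)_{00,00}, σ(p)_{00,11}], [σ(p)_{11,00}, σ(p)_{11,11}]]. Then tr(N(p)) = (2−p)/2, and |tr(N(p)X)| + |tr(N(p)Y)| + |tr(N(p)Z)| = √2(1−p); consequently |tr(N(p)X)| + |tr(N(p)Y)| + |tr(N(p)Z)| > tr(N(p)) if and only if p < (6 − 2√2)/7. That is, the parity-checked Jamiolkowski state of the depolarized π/8 gate lies outside the single-qubit stabilizer octahedron exactly when the depolarizing rate is below (6 − 2√2)/7. -/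

import Mathlib

open Matrix Kronecker

noncomputable def Id2 : Matrix (Fin 2) (Fin 2) ℂ := 1
noncomputable def PX : Matrix (Fin 2) (Fin 2) ℂ := !![0, 1; 1, 0]
noncomputable def PY : Matrix (Fin 2) (Fin 2) ℂ := !![0, -Complex.I; Complex.I, 0]
noncomputable def PZ : Matrix (Fin 2) (Fin 2) ℂ := !![1, 0; 0, -1]

/-- The `π/8` gate (up to phase): `T = diag(1, e^{iπ/4})`. -/
noncomputable def Tgate : Matrix (Fin 2) (Fin 2) ℂ :=
  !![1, 0; 0, Complex.exp (Real.pi / 4 * Complex.I)]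

/-- The Bell state `Ψ = (1/√2)(|00⟩ + |11⟩)` as a vector in `ℂ²⊗ℂ²`. -/
noncomputable def bell : Fin 2 × Fin 2 → ℂ :=
  fun p => if p.1 = p.2 then ((Real.sqrt 2 : ℂ))⁻¹ else 0

/-- The projector `|Ψ⟩⟨Ψ|`. -/
noncomputable def bellProj : Matrix (Fin 2 × Fin 2) (Fin 2 × Fin 2) ℂ :=
  fun p q => bell p * (starRingEnd ℂ) (bell q)

/-- The Jamiolkowski state of the `π/8` gate depolarized at rate `p`. -/
noncomputable def sigmaDep (p : ℝ) : Matrix (Fin 2 × Fin 2) (Fin 2 × Fin 2) ℂ :=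
  (((1 - p : ℝ)) : ℂ) • ((Id2 ⊗ₖ Tgate) * bellProj * (Id2 ⊗ₖ Tgate)ᴴ) +
    (((p / 4 : ℝ)) : ℂ) • (Id2 ⊗ₖ Id2)

/-!
`(I ⊗ U)Ψ` has entries `U j i / √2`, so `σ(p)_{(i,j),(k,l)} = (1-p) U_{ji} conj(U_{lk}) / 2 + (p/4) δ`.
For the diagonal gate `T` the even-parity block `N` therefore has `(2-p)/4` on the diagonal and
`z = (1-p) e^{iπ/4} / 2` below it, and the Pauli coefficients of such a Hermitian block are
`2 Re z`, `2 Im z` and `0`, i.e. `(1-p)/√2` twice. The final comparison is linear in `p`.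
-/

open Complex ComplexConjugate

lemma trace_mul_PX_of_conj (a d z : ℂ) : (!![a, conj z; z, d] * PX).trace = (2 * z.re : ℝ) := by
  rw [PX, mul_fin_two, trace_fin_two_of, ← add_conj]
  ring

lemma trace_mul_PY_of_conj (a d z : ℂ) : (!![a, conj z; z, d] * PY).trace = (2 * z.im : ℝ) := by
  rw [PY, mul_fin_two, trace_fin_two_of]
  have h := sub_conj z
  push_cast at h ⊢
  linear_combination (-I) * h - 2 * z.im * I_sq

lemma trace_mul_PZ (a b c d : ℂ) : (!![a, b; c, d] * PZ).trace = a - d := by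
  rw [PZ, mul_fin_two, trace_fin_two_of]
  ring

lemma mul_vecMulVec_star_mul_conjTranspose {α m n : Type*} [Semiring α] [StarRing α] [Fintype m]
    (A : Matrix n m α) (v : m → α) :
    A * vecMulVec v (star v) * Aᴴ = vecMulVec (A *ᵥ v) (star (A *ᵥ v)) := by
  rw [mul_vecMulVec, vecMulVec_mul, star_mulVec]

lemma Id2_kronecker_mulVec_bell (U : Matrix (Fin 2) (Fin 2) ℂ) (i j : Fin 2) :
    ((Id2 ⊗ₖ U) *ᵥ bell) (i, j) = U j i / Real.sqrt 2 := by
  simp [Id2, bell, mulVec, dotProduct, Fintype.sum_prod_type, Matrix.one_apply, div_eq_mul_inv]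

lemma Id2_kronecker_conj_bellProj_apply (U : Matrix (Fin 2) (Fin 2) ℂ) (i j k l : Fin 2) :
    ((Id2 ⊗ₖ U) * bellProj * (Id2 ⊗ₖ U)ᴴ) (i, j) (k, l) = U j i * conj (U l k) / 2 := by
  have hbell : bellProj = vecMulVec bell (star bell) := rfl
  have hsqrt : (Real.sqrt 2 : ℂ) * Real.sqrt 2 = 2 := by
    rw [← ofReal_mul, Real.mul_self_sqrt zero_le_two]; norm_num
  rw [hbell, mul_vecMulVec_star_mul_conjTranspose, vecMulVec_apply, Pi.star_apply,
    Id2_kronecker_mulVec_bell, Id2_kronecker_mulVec_bell, star_div₀, ← hsqrt]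
  simp only [RCLike.star_def, conj_ofReal]
  field_simp

lemma sigmaDep_apply (p : ℝ) (i j k l : Fin 2) :
    sigmaDep p (i, j) (k, l) = (1 - p) * (Tgate j i * conj (Tgate l k) / 2) +
      p / 4 * (if (i, j) = (k, l) then 1 else 0) := by
  rw [sigmaDep, Matrix.add_apply, Matrix.smul_apply, Matrix.smul_apply,
    Id2_kronecker_conj_bellProj_apply, Id2, one_kronecker_one, one_apply]
  simp

lemma Tgate_zero_zero : Tgate 0 0 = 1 := rfl

lemma Tgate_one_one : Tgate 1 1 = exp ((Real.pi / 4 : ℝ) * I) := by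
  simp [Tgate]

lemma Tgate_mul_conj (a : Fin 2) : Tgate a a * conj (Tgate a a) = 1 := by
  revert a
  rw [Fin.forall_fin_two]
  constructor
  · rw [Tgate_zero_zero, map_one, mul_one]
  · rw [Tgate_one_one, mul_conj, normSq_eq_norm_sq, norm_exp_ofReal_mul_I]
    norm_num

lemma sigmaDep_apply_diag (p : ℝ) (a : Fin 2) : sigmaDep p (a, a) (a, a) = ((2 - p) / 4 : ℝ) := by
  rw [sigmaDep_apply, Tgate_mul_conj, if_pos rfl]
  push_cast
  ring

lemma sigmaDep_apply_one_zero (p : ℝ) :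
    sigmaDep p (1, 1) (0, 0) = ((1 - p) / 2 : ℝ) * exp ((Real.pi / 4 : ℝ) * I) := by
  rw [sigmaDep_apply, Tgate_one_one, Tgate_zero_zero, map_one, if_neg (by decide)]
  push_cast
  ring

lemma sigmaDep_apply_zero_one (p : ℝ) :
    sigmaDep p (0, 0) (1, 1) = conj (((1 - p) / 2 : ℝ) * exp ((Real.pi / 4 : ℝ) * I)) := by
  rw [sigmaDep_apply, Tgate_one_one, Tgate_zero_zero, map_mul, conj_ofReal, if_neg (by decide)]
  push_cast
  ring

lemma two_sub_div_two_lt_sqrt_two_mul_iff (p : ℝ) :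
    (2 - p) / 2 < Real.sqrt 2 * (1 - p) ↔ p < (6 - 2 * Real.sqrt 2) / 7 := by
  have hsq : Real.sqrt 2 * Real.sqrt 2 = 2 := Real.mul_self_sqrt zero_le_two
  have hpos : 0 < 2 * Real.sqrt 2 - 1 := by nlinarith [Real.sqrt_nonneg 2]
  have hthreshold : (6 - 2 * Real.sqrt 2) / 7 = (2 * Real.sqrt 2 - 2) / (2 * Real.sqrt 2 - 1) := by
    rw [div_eq_div_iff (by norm_num) hpos.ne']; linear_combination (-4) * hsq
  rw [hthreshold, lt_div_iff₀ hpos]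
  constructor <;> intro h <;> linarith

theorem stmt_17_general (p : ℝ) (hp1 : p ≤ 1) :
    let σ := sigmaDep p
    let N : Matrix (Fin 2) (Fin 2) ℂ :=
      !![σ (0, 0) (0, 0), σ (0, 0) (1, 1); σ (1, 1) (0, 0), σ (1, 1) (1, 1)]
    N.trace = (((2 - p) / 2 : ℝ) : ℂ) ∧
      ‖(N * PX).trace‖ + ‖(N * PY).trace‖ +
          ‖(N * PZ).trace‖ = Real.sqrt 2 * (1 - p) ∧
      (‖(N * PX).trace‖ + ‖(N * PY).trace‖ +
          ‖(N * PZ).trace‖ > (2 - p) / 2 ↔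
        p < (6 - 2 * Real.sqrt 2) / 7) := by
  intro σ N
  set z : ℂ := ((1 - p) / 2 : ℝ) * exp ((Real.pi / 4 : ℝ) * I)
  have hN : N = !![(((2 - p) / 4 : ℝ) : ℂ), conj z; z, ((2 - p) / 4 : ℝ)] := by
    simp only [N, σ, sigmaDep_apply_diag, sigmaDep_apply_zero_one, sigmaDep_apply_one_zero]
    rfl
  have hre : z.re = (1 - p) / 2 * (Real.sqrt 2 / 2) := by
    rw [re_ofReal_mul, exp_ofReal_mul_I_re, Real.cos_pi_div_four]
  have him : z.im = (1 - p) / 2 * (Real.sqrt 2 / 2) := by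
    rw [im_ofReal_mul, exp_ofReal_mul_I_im, Real.sin_pi_div_four]
  have hbloch : ‖(N * PX).trace‖ + ‖(N * PY).trace‖ + ‖(N * PZ).trace‖ =
      Real.sqrt 2 * (1 - p) := by
    have hnonneg : 0 ≤ 2 * ((1 - p) / 2 * (Real.sqrt 2 / 2)) := by
      have : 0 ≤ 1 - p := by linarith
      positivity
    rw [hN, trace_mul_PX_of_conj, trace_mul_PY_of_conj, trace_mul_PZ, sub_self, norm_zero,
      norm_real, norm_real, hre, him, Real.norm_of_nonneg hnonneg]
    ring
  refine ⟨?_, hbloch, ?_⟩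
  · rw [hN, trace_fin_two_of]
    push_cast
    ring
  · rw [hbloch, gt_iff_lt, two_sub_div_two_lt_sqrt_two_mul_iff]

/-- The parity-checked Jamiolkowski state of the depolarized `π/8` gate has
`tr N = (2−p)/2` and `|tr(NX)| + |tr(NY)| + |tr(NZ)| = √2(1−p)`; consequently it
lies outside the single-qubit stabilizer octahedron iff `p < (6 − 2√2)/7`. -/
theorem stmt_17 (p : ℝ) (hp0 : 0 ≤ p) (hp1 : p ≤ 1) :
    let σ := sigmaDep p
    let N : Matrix (Fin 2) (Fin 2) ℂ :=
      !![σ (0, 0) (0, 0), σ (0, 0) (1, 1); σ (1, 1) (0, 0), σ (1, 1) (1, 1)]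
    N.trace = (((2 - p) / 2 : ℝ) : ℂ) ∧
      ‖(N * PX).trace‖ + ‖(N * PY).trace‖ +
          ‖(N * PZ).trace‖ = Real.sqrt 2 * (1 - p) ∧
      (‖(N * PX).trace‖ + ‖(N * PY).trace‖ +
          ‖(N * PZ).trace‖ > (2 - p) / 2 ↔
        p < (6 - 2 * Real.sqrt 2) / 7) :=
  stmt_17_general p hp1
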